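/- Suppose there are sequences kₙ ∈ [0,1) and εₙ ≥ 0 with εₙ/(1−kₙ) → 0 such that d(Tⁿx,Tⁿy)² ≤ kₙ·d(x,y)² + (1−kₙ)·D² + εₙ for all (x,y) ∈ (A×B) ∪ (B×A) and all n. Then lim_{n→∞} d(T^{2n}x, T^{2n+2}x) = 0 and lim_{n→∞} d(T^{2n+1}x, T^{2n+3}x) = 0 for every x ∈ A∪B. (Theorem 3.3(ii), first part.) -/

import Mathlib

/-!
Write `z m = T^[m] x`. The excess `a m = d(z m, z (m+1))² - D²` is nonnegative and satisfies
`a (m + n) ≤ k n * a m + ε n`, so its limsup `L` obeys `(1 - k n) L ≤ ε n` for every `n`; hence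
`L = 0` and consecutive points of the orbit are asymptotically at distance `D`. Since `T` swaps
`A` and `B`, `z m` and `z (m+2)` lie in the same convex set, so their midpoint is at distance at
least `D` from `z (m+1)`, which lies in the other one. Uniform convexity applied to
`z m - z (m+1)` and `z (m+2) - z (m+1)`, whose norms tend to `D` while the norm of their half-sum
stays at least `D`, then forces `d(z m, z (m+2)) → 0`.
-/

open Filter Topology

theorem tendsto_zero_of_le_mul_add {a k ε : ℕ → ℝ} (ha : ∀ m, 0 ≤ a m)
    (hk : ∀ n, 0 ≤ k n ∧ k n < 1)
    (hke : Tendsto (fun n => ε n / (1 - k n)) atTop (𝓝 0))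
    (hrec : ∀ n m, a (m + n) ≤ k n * a m + ε n) :
    Tendsto a atTop (𝓝 0) := by
  have hbelow : IsBoundedUnder (· ≥ ·) atTop a := isBoundedUnder_of ⟨0, ha⟩
  have habove : IsBoundedUnder (· ≤ ·) atTop a := by
    obtain ⟨E, hE⟩ := hke.bddAbove_range
    refine isBoundedUnder_of ⟨a 0 + max E 0, fun m => ?_⟩
    have hratio : ε m / (1 - k m) ≤ max E 0 := (hE ⟨m, rfl⟩).trans (le_max_left _ _)
    rw [div_le_iff₀ (sub_pos.2 (hk m).2)] at hratio
    have ham : a m ≤ k m * a 0 + ε m := by simpa using hrec m 0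
    nlinarith [ha 0, hk m, le_max_right E 0]
  have hL : ∀ n, limsup a atTop ≤ ε n / (1 - k n) := by
    intro n
    set f := fun t => k n * t + ε n
    have hf : Monotone f := (monotone_id.const_mul (hk n).1).add_const (ε n)
    have hshift : limsup a atTop ≤ f (limsup a atTop) :=
      calc limsup a atTop = limsup (fun m => a (m + n)) atTop := (limsup_nat_add a n).symm
        _ ≤ limsup (f ∘ a) atTop :=
          limsup_le_limsup (Eventually.of_forall (hrec n))
            (isBoundedUnder_of ⟨0, fun m => ha _⟩).isCoboundedUnder_le
            (hf.isBoundedUnder_le_comp habove)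
        _ = f (limsup a atTop) :=
          (hf.map_limsup_of_continuousAt a (by fun_prop) habove hbelow.isCoboundedUnder_le).symm
    rw [le_div_iff₀ (sub_pos.2 (hk n).2)]
    linarith
  exact tendsto_of_le_liminf_of_limsup_le
    (le_liminf_of_le habove.isCoboundedUnder_ge (Eventually.of_forall ha))
    (ge_of_tendsto' hke hL) habove hbelow

section Normed

variable {X : Type*} [NormedAddCommGroup X] [NormedSpace ℝ X]

theorem two_mul_le_norm_sub_add_sub {s : Set X} (hs : Convex ℝ s) {x x' y : X} {D : ℝ}
    (hD : ∀ a ∈ s, D ≤ dist a y) (hx : x ∈ s) (hx' : x' ∈ s) :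
    2 * D ≤ ‖x - y + (x' - y)‖ := by
  have hmid : x - y + (x' - y) = (2 : ℝ) • (midpoint ℝ x x' - y) := by
    rw [midpoint_eq_smul_add, invOf_eq_inv]
    module
  rw [hmid, norm_smul, ← dist_eq_norm, Real.norm_two]
  exact mul_le_mul_of_nonneg_left (hD _ (hs.midpoint_mem hx hx')) zero_le_two

variable [UniformConvexSpace X]

theorem tendsto_norm_sub_of_norm_le_one_of_tendsto_norm_add {u v : ℕ → X}
    (hu : ∀ n, ‖u n‖ ≤ 1) (hv : ∀ n, ‖v n‖ ≤ 1)
    (huv : Tendsto (fun n => ‖u n + v n‖) atTop (𝓝 2)) :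
    Tendsto (fun n => ‖u n - v n‖) atTop (𝓝 0) := by
  refine tendsto_order.2 ⟨fun e he => Eventually.of_forall fun n => he.trans_le (norm_nonneg _),
    fun e he => ?_⟩
  obtain ⟨δ, hδ, hball⟩ := exists_forall_closed_ball_dist_add_le_two_sub X he
  filter_upwards [huv.eventually (lt_mem_nhds (sub_lt_self 2 hδ))] with n hn
  exact lt_of_not_ge fun h => hn.not_ge (hball (hu n) (hv n) h)

theorem tendsto_norm_sub_of_tendsto_norm_of_le_norm_add {p q : ℕ → X} {D : ℝ} (hD : 0 ≤ D)
    (hp : Tendsto (fun n => ‖p n‖) atTop (𝓝 D)) (hq : Tendsto (fun n => ‖q n‖) atTop (𝓝 D))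
    (hpq : ∀ n, 2 * D ≤ ‖p n + q n‖) :
    Tendsto (fun n => ‖p n - q n‖) atTop (𝓝 0) := by
  rcases hD.eq_or_lt with rfl | hDpos
  · exact squeeze_zero (fun n => norm_nonneg _) (fun n => norm_sub_le _ _)
      (by simpa using hp.add hq)
  set R := fun n => max ‖p n‖ ‖q n‖
  have hR : Tendsto R atTop (𝓝 D) := by simpa using hp.max hq
  have hR0 : ∀ n, 0 ≤ R n := fun n => (norm_nonneg _).trans (le_max_left _ _)
  have hscaled : ∀ {w : ℕ → X}, (∀ n, ‖w n‖ ≤ R n) → ∀ n, ‖(R n)⁻¹ • w n‖ ≤ 1 := by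
    intro w hw n
    rw [norm_smul, norm_inv, Real.norm_of_nonneg (hR0 n)]
    exact inv_mul_le_one_of_le₀ (hw n) (hR0 n)
  have hu := hscaled (w := p) fun n => le_max_left _ _
  have hv := hscaled (w := q) fun n => le_max_right _ _
  have hsum : Tendsto (fun n => ‖(R n)⁻¹ • p n + (R n)⁻¹ • q n‖) atTop (𝓝 2) := by
    have hlow : Tendsto (fun n => (R n)⁻¹ * (2 * D)) atTop (𝓝 2) := by
      convert (hR.inv₀ hDpos.ne').mul_const (2 * D) using 2
      field_simp
    refine tendsto_of_tendsto_of_tendsto_of_le_of_le hlow tendsto_const_nhds (fun n => ?_)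
      (fun n => (norm_add_le _ _).trans (by linarith [hu n, hv n]))
    rw [← smul_add, norm_smul, norm_inv, Real.norm_of_nonneg (hR0 n)]
    exact mul_le_mul_of_nonneg_left (hpq n) (inv_nonneg.2 (hR0 n))
  have hdiff := hR.mul (tendsto_norm_sub_of_norm_le_one_of_tendsto_norm_add hu hv hsum)
  rw [mul_zero] at hdiff
  refine hdiff.congr' ?_
  filter_upwards [hR.eventually (lt_mem_nhds hDpos)] with n hn
  rw [← smul_sub, norm_smul, Real.norm_of_nonneg (inv_nonneg.2 (hR0 n)),
    mul_inv_cancel_left₀ hn.ne']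

end Normed

section Cyclic

variable {X : Type*} {A B : Set X} {T : X → X}

theorem iterate_mem_alternating (hTA : Set.MapsTo T A B) (hTB : Set.MapsTo T B A)
    {x : X} (hx : x ∈ A ∪ B) (m : ℕ) :
    (T^[m] x ∈ A ∧ T^[m + 1] x ∈ B) ∨ (T^[m] x ∈ B ∧ T^[m + 1] x ∈ A) := by
  induction m generalizing x with
  | zero => exact hx.imp (fun h => ⟨h, hTA h⟩) (fun h => ⟨h, hTB h⟩)
  | succ m ih =>
    rw [Function.iterate_succ_apply, Function.iterate_succ_apply]
    exact ih (hx.elim (fun h => Or.inr (hTA h)) (fun h => Or.inl (hTB h)))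

variable [PseudoMetricSpace X] {D : ℝ} {k ε : ℕ → ℝ}

theorem tendsto_dist_iterate_succ (hTA : Set.MapsTo T A B) (hTB : Set.MapsTo T B A)
    (hD0 : 0 ≤ D) (hD : ∀ a ∈ A, ∀ b ∈ B, D ≤ dist a b)
    (hk : ∀ n, 0 ≤ k n ∧ k n < 1)
    (hke : Tendsto (fun n => ε n / (1 - k n)) atTop (𝓝 0))
    (hineq : ∀ n x y, (x ∈ A ∧ y ∈ B) ∨ (x ∈ B ∧ y ∈ A) →
      dist (T^[n] x) (T^[n] y) ^ 2 ≤ k n * dist x y ^ 2 + (1 - k n) * D ^ 2 + ε n)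
    {x : X} (hx : x ∈ A ∪ B) :
    Tendsto (fun m => dist (T^[m] x) (T^[m + 1] x)) atTop (𝓝 D) := by
  have hDle : ∀ m, D ≤ dist (T^[m] x) (T^[m + 1] x) := fun m =>
    (iterate_mem_alternating hTA hTB hx m).elim (fun h => hD _ h.1 _ h.2)
      (fun h => (hD _ h.2 _ h.1).trans_eq (dist_comm _ _))
  have hexcess : Tendsto (fun m => dist (T^[m] x) (T^[m + 1] x) ^ 2 - D ^ 2) atTop (𝓝 0) := by
    refine tendsto_zero_of_le_mul_add (fun m => sub_nonneg.2 (pow_le_pow_left₀ hD0 (hDle m) 2))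
      hk hke fun n m => ?_
    have h := hineq n _ _ (iterate_mem_alternating hTA hTB hx m)
    rw [← Function.iterate_add_apply, ← Function.iterate_add_apply, Nat.add_comm n m,
      ← Nat.add_assoc, Nat.add_comm n m] at h
    linarith
  have h := (hexcess.add_const (D ^ 2)).sqrt
  simp only [sub_add_cancel, zero_add] at h
  simpa only [Real.sqrt_sq dist_nonneg, Real.sqrt_sq hD0] using h

end Cyclic

theorem tendsto_dist_iterate_add_two {X : Type*} [NormedAddCommGroup X] [NormedSpace ℝ X]
    [UniformConvexSpace X] {A B : Set X} (hAconv : Convex ℝ A) (hBconv : Convex ℝ B)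
    {T : X → X} (hTA : Set.MapsTo T A B) (hTB : Set.MapsTo T B A)
    {D : ℝ} (hD0 : 0 ≤ D) (hD : ∀ a ∈ A, ∀ b ∈ B, D ≤ dist a b)
    {k ε : ℕ → ℝ} (hk : ∀ n, 0 ≤ k n ∧ k n < 1)
    (hke : Tendsto (fun n => ε n / (1 - k n)) atTop (𝓝 0))
    (hineq : ∀ n x y, (x ∈ A ∧ y ∈ B) ∨ (x ∈ B ∧ y ∈ A) →
      dist (T^[n] x) (T^[n] y) ^ 2 ≤ k n * dist x y ^ 2 + (1 - k n) * D ^ 2 + ε n)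
    {x : X} (hx : x ∈ A ∪ B) :
    Tendsto (fun m => dist (T^[m] x) (T^[m + 2] x)) atTop (𝓝 0) := by
  have hsucc := tendsto_dist_iterate_succ hTA hTB hD0 hD hk hke hineq hx
  have hsucc' : Tendsto (fun m => dist (T^[m + 1] x) (T^[m + 2] x)) atTop (𝓝 D) :=
    hsucc.comp (tendsto_add_atTop_nat 1)
  have hmid : ∀ m, 2 * D ≤ ‖T^[m] x - T^[m + 1] x + (T^[m + 2] x - T^[m + 1] x)‖ := by
    intro m
    rcases iterate_mem_alternating hTA hTB hx m with ⟨h₀, h₁⟩ | ⟨h₀, h₁⟩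
    · have h₂ : T^[m + 2] x ∈ A := by rw [Function.iterate_succ_apply']; exact hTB h₁
      exact two_mul_le_norm_sub_add_sub hAconv (fun a ha => hD a ha _ h₁) h₀ h₂
    · have h₂ : T^[m + 2] x ∈ B := by rw [Function.iterate_succ_apply']; exact hTA h₁
      exact two_mul_le_norm_sub_add_sub hBconv
        (fun b hb => (hD _ h₁ b hb).trans_eq (dist_comm _ _)) h₀ h₂
  simpa only [dist_eq_norm, sub_sub_sub_cancel_right] using
    tendsto_norm_sub_of_tendsto_norm_of_le_norm_add hD0
      (by simpa only [dist_eq_norm] using hsucc)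
      (by simpa only [dist_eq_norm, norm_sub_rev] using hsucc') hmid

theorem thm3_3_ii_first_general {X : Type*} [NormedAddCommGroup X] [NormedSpace ℝ X]
    [UniformConvexSpace X]
    (A B : Set X) (hAconv : Convex ℝ A) (hBconv : Convex ℝ B)
    (T : X → X) (hTA : Set.MapsTo T A B) (hTB : Set.MapsTo T B A)
    (D : ℝ) (hD : D = sInf (Set.image2 dist A B))
    (k ε : ℕ → ℝ)
    (hk : ∀ n, 0 ≤ k n ∧ k n < 1)
    (hke : Tendsto (fun n => ε n / (1 - k n)) atTop (nhds 0))
    (hineq : ∀ n x y, (x ∈ A ∧ y ∈ B) ∨ (x ∈ B ∧ y ∈ A) →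
      dist (T^[n] x) (T^[n] y) ^ 2 ≤
        k n * dist x y ^ 2 + (1 - k n) * D ^ 2 + ε n) :
    ∀ x ∈ A ∪ B,
      Tendsto (fun n => dist (T^[2 * n] x) (T^[2 * n + 2] x)) atTop (nhds 0) ∧
      Tendsto (fun n => dist (T^[2 * n + 1] x) (T^[2 * n + 3] x)) atTop (nhds 0) := by
  have hdist_nonneg : ∀ d ∈ Set.image2 dist A B, 0 ≤ d := by
    rintro _ ⟨a, -, b, -, rfl⟩
    exact dist_nonneg
  have hD0 : 0 ≤ D := hD ▸ Real.sInf_nonneg hdist_nonneg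
  have hDle : ∀ a ∈ A, ∀ b ∈ B, D ≤ dist a b := fun a ha b hb =>
    hD ▸ csInf_le ⟨0, hdist_nonneg⟩ (Set.mem_image2_of_mem ha hb)
  intro x hx
  have h := tendsto_dist_iterate_add_two hAconv hBconv hTA hTB hD0 hDle hk hke hineq hx
  exact ⟨h.comp (StrictMono.tendsto_atTop (φ := fun n => 2 * n) fun _ _ h => by dsimp; omega),
    h.comp (StrictMono.tendsto_atTop (φ := fun n => 2 * n + 1) fun _ _ h => by dsimp; omega)⟩

/-- Theorem 3.3(ii), first part: in a uniformly convex Banach space with `A, B`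
nonempty closed convex, under the strict cyclic contractive condition,
`d(T^{2n}x, T^{2n+2}x) → 0` and `d(T^{2n+1}x, T^{2n+3}x) → 0` for every
`x ∈ A ∪ B`. -/
theorem thm3_3_ii_first {X : Type*} [NormedAddCommGroup X] [NormedSpace ℝ X]
    [UniformConvexSpace X] [CompleteSpace X]
    (A B : Set X) (hA : A.Nonempty) (hB : B.Nonempty)
    (hAc : IsClosed A) (hBc : IsClosed B) (hAconv : Convex ℝ A) (hBconv : Convex ℝ B)
    (T : X → X) (hTA : Set.MapsTo T A B) (hTB : Set.MapsTo T B A)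
    (D : ℝ) (hD : D = sInf (Set.image2 dist A B))
    (k ε : ℕ → ℝ)
    (hk : ∀ n, 0 ≤ k n ∧ k n < 1) (hε : ∀ n, 0 ≤ ε n)
    (hke : Tendsto (fun n => ε n / (1 - k n)) atTop (nhds 0))
    (hineq : ∀ n x y, (x ∈ A ∧ y ∈ B) ∨ (x ∈ B ∧ y ∈ A) →
      dist (T^[n] x) (T^[n] y) ^ 2 ≤
        k n * dist x y ^ 2 + (1 - k n) * D ^ 2 + ε n) :
    ∀ x ∈ A ∪ B,
      Tendsto (fun n => dist (T^[2 * n] x) (T^[2 * n + 2] x)) atTop (nhds 0) ∧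
      Tendsto (fun n => dist (T^[2 * n + 1] x) (T^[2 * n + 3] x)) atTop (nhds 0) :=
  thm3_3_ii_first_general A B hAconv hBconv T hTA hTB D hD k ε hk hke hineq
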